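/- arXiv:2206.12060 — 4 statements merged into one kernel-verified Lean document; each statement's English description precedes it below -/
import Mathlib

section
/- Let x = (x_1, ..., x_m) be a nonzero vector in ℂ^m, and define c_k = Σ_{i=k+1}^m x_i x̄_{i−k} for k = 0, ..., m−1 and c_{−k} = c̄_k. Then the m×m Toeplitz matrix C_x with entries (C_x)_{ij} = c_{j−i} is Hermitian positive definite. -/
/-!
With `S` the matrix of multiplication by the polynomial `∑ conj (x k) X^k` on polynomials of
degree `< m`, the autocorrelations are the inner products of the columns of `S`, so
`C_x = Sᴴ S`. Such a Gram matrix is positive definite as soon as `S` is injective, and it is: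
the lowest-degree coefficient of a product of nonzero polynomials is the product of their
lowest-degree coefficients.
-/

open Matrix ComplexOrder

variable {m : ℕ}

/-- Sample autocorrelation sequence: `c k = Σ_{i : k ≤ i < m} x i * conj (x (i−k))`
(0-based indexing of the 1-based `c_k = Σ_{i=k+1}^m x_i x̄_{i−k}`). -/
noncomputable def autocorr (x : Fin m → ℂ) (k : ℕ) : ℂ :=
  ∑ i : Fin m, if k ≤ (i : ℕ) then
    x i * star (x ⟨(i : ℕ) - k, Nat.lt_of_le_of_lt (Nat.sub_le _ _) i.isLt⟩) else 0

/-- The Toeplitz covariance matrix of `x`, with `(i,j)` entry `c_{j−i}`,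
where `c_{−k} = conj (c_k)`. -/
noncomputable def toeplitzCov (x : Fin m → ℂ) : Matrix (Fin m) (Fin m) ℂ :=
  Matrix.of fun i j =>
    if (i : ℕ) ≤ (j : ℕ) then autocorr x ((j : ℕ) - (i : ℕ))
    else star (autocorr x ((i : ℕ) - (j : ℕ)))

lemma exists_ne_zero_forall_lt_eq_zero {ι M : Type*} [LinearOrder ι] [WellFoundedLT ι] [Zero M]
    {x : ι → M} (hx : x ≠ 0) : ∃ p, x p ≠ 0 ∧ ∀ k < p, x k = 0 := by
  obtain ⟨a, ha⟩ := Function.ne_iff.mp hx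
  obtain ⟨p, hp, hmin⟩ := wellFounded_lt.has_min {k | x k ≠ 0} ⟨a, ha⟩
  exact ⟨p, hp, fun k hk => not_not.mp fun h => hmin k h hk⟩

namespace Matrix

variable {R : Type*}

/-- The matrix of `v ↦ x * v`, viewing vectors as coefficient lists of polynomials. -/
def convMatrix [Zero R] (x : Fin m → R) : Matrix (Fin (2 * m)) (Fin m) R :=
  of fun t j => if h : (j : ℕ) ≤ t ∧ (t : ℕ) - j < m then x ⟨t - j, h.2⟩ else 0

lemma convMatrix_mulVec_apply_add [NonUnitalNonAssocSemiring R] {x v : Fin m → R} {p q : Fin m}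
    (hx : ∀ k < p, x k = 0) (hv : ∀ k < q, v k = 0) :
    (convMatrix x *ᵥ v) ⟨p + q, by omega⟩ = x p * v q := by
  rw [mulVec, dotProduct, Finset.sum_eq_single q]
  · simp [convMatrix]
  · intro j _ hjq
    rcases lt_or_gt_of_ne hjq with hlt | hgt
    · rw [hv j hlt, mul_zero]
    · simp only [convMatrix, of_apply]
      split_ifs with h
      · rw [Fin.lt_def] at hgt
        rw [hx _ (Fin.lt_def.mpr (by simp only at h ⊢; omega)), zero_mul]
      · rw [zero_mul]
  · simp

lemma convMatrix_mulVec_injective [Ring R] [NoZeroDivisors R] {x : Fin m → R} (hx : x ≠ 0) :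
    Function.Injective (convMatrix x).mulVec := by
  intro v w hvw
  have hker : convMatrix x *ᵥ (v - w) = 0 := by rw [mulVec_sub, hvw, sub_self]
  rw [← sub_eq_zero]
  by_contra hvw0
  obtain ⟨p, hxp, hx⟩ := exists_ne_zero_forall_lt_eq_zero hx
  obtain ⟨q, hvq, hv⟩ := exists_ne_zero_forall_lt_eq_zero hvw0
  have := congrFun hker ⟨p + q, by omega⟩
  rw [convMatrix_mulVec_apply_add hx hv] at this
  exact mul_ne_zero hxp hvq this

end Matrix

lemma conjTranspose_convMatrix_mul_self_apply_of_le (x : Fin m → ℂ) {i j : Fin m}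
    (hij : (i : ℕ) ≤ j) :
    ((convMatrix (star x))ᴴ * convMatrix (star x)) i j = autocorr x (j - i) := by
  -- the nonzero entries of column `i` sit in the rows `u + i`
  refine (Fintype.sum_of_injective (fun u : Fin m => (⟨u + i, by omega⟩ : Fin (2 * m)))
    (fun u w h => Fin.ext (by simpa using h)) _ _ ?_ ?_).symm
  · intro t ht
    have : ¬((i : ℕ) ≤ t ∧ (t : ℕ) - i < m) := fun h => ht ⟨⟨t - i, h.2⟩, Fin.ext (by simp; omega)⟩
    simp [convMatrix, this]
  · intro u
    by_cases h : (j : ℕ) - i ≤ u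
    · have h' : (j : ℕ) ≤ u + i ∧ (u : ℕ) + i - j < m := ⟨by omega, by omega⟩
      simp only [convMatrix, conjTranspose_apply, of_apply, if_pos h,
        dif_pos (show (i : ℕ) ≤ u + i ∧ (u : ℕ) + i - i < m by omega), dif_pos h', Pi.star_apply,
        star_star]
      congr 3
      · ext; simp
      · ext; simp; omega
    · have h' : ¬((j : ℕ) ≤ u + i ∧ (u : ℕ) + i - j < m) := by omega
      simp [h, h', convMatrix]

lemma toeplitzCov_eq_conjTranspose_convMatrix_mul_self (x : Fin m → ℂ) :
    toeplitzCov x = (convMatrix (star x))ᴴ * convMatrix (star x) := by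
  ext i j
  rcases le_or_gt (i : ℕ) j with h | h
  · rw [conjTranspose_convMatrix_mul_self_apply_of_le x h]
    simp only [toeplitzCov, of_apply, if_pos h]
  · rw [← (isHermitian_conjTranspose_mul_self _).apply i j,
      conjTranspose_convMatrix_mul_self_apply_of_le x h.le]
    simp only [toeplitzCov, of_apply, if_neg h.not_ge]

/-- The Toeplitz autocorrelation matrix of a nonzero signal is Hermitian
positive definite. -/
theorem toeplitzCov_posDef (x : Fin m → ℂ) (hx : x ≠ 0) :
    (toeplitzCov x).PosDef := by
  rw [toeplitzCov_eq_conjTranspose_convMatrix_mul_self]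
  exact .conjTranspose_mul_self _ (convMatrix_mulVec_injective (star_ne_zero.mpr hx))
end

section
/- The Jensen–Shannon divergence and the log-determinant divergence coincide on Hermitian positive definite matrices: for all m×m Hermitian positive definite C_1, C_2, (1/2)[D_KL(C_1, (C_1+C_2)/2) + D_KL(C_2, (C_1+C_2)/2)] = log det((C_1+C_2)/2) − (1/2) log det(C_1 C_2). -/
open Matrix ComplexOrder

variable {m : ℕ}

/-- Kullback–Leibler (Stein) divergence
`D_KL(A,B) = tr(A B⁻¹ − I) − log det (A B⁻¹)`. -/
noncomputable def DKL (A B : Matrix (Fin m) (Fin m) ℂ) : ℂ :=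
  (A * B⁻¹ - 1).trace - Complex.log (A * B⁻¹).det

/-!
The trace terms of the two divergences cancel, because `C₁ M⁻¹ + C₂ M⁻¹ = 2` for the midpoint
`M = (C₁ + C₂)/2`. Positive definite matrices have positive real determinants, on which
`Complex.log` is additive, so what remains is
`-(log det C₁ - log det M) - (log det C₂ - log det M) = 2 log det M - log det (C₁ C₂)`.
-/

namespace Complex

lemma log_mul_of_pos {z w : ℂ} (hz : 0 < z) (hw : 0 < w) : log (z * w) = log z + log w :=
  log_mul hz.ne' hw.ne' <| by
    simp only [arg_eq_zero_iff_zero_le.mpr hz.le, arg_eq_zero_iff_zero_le.mpr hw.le, add_zero,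
      Set.mem_Ioc]
    exact ⟨neg_neg_of_pos Real.pi_pos, Real.pi_pos.le⟩

end Complex

namespace Matrix

variable {n : Type*} [Fintype n] [DecidableEq n]

lemma trace_mul_inv_sub_one_add_trace_mul_inv_sub_one {R : Type*} [CommRing R]
    {A B M : Matrix n n R} (hM : IsUnit M.det) (hAB : A + B = (2 : R) • M) :
    (A * M⁻¹ - 1).trace + (B * M⁻¹ - 1).trace = 0 := by
  have hsum : A * M⁻¹ + B * M⁻¹ = (2 : R) • 1 := by
    rw [← add_mul, hAB, smul_mul_assoc, mul_nonsing_inv _ hM]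
  have htrace := congrArg trace hsum
  rw [trace_add, trace_smul, smul_eq_mul] at htrace
  rw [trace_sub, trace_sub]
  linear_combination htrace

namespace PosDef

variable {A B : Matrix n n ℂ}

lemma log_det_mul (hA : A.PosDef) (hB : B.PosDef) :
    Complex.log (A * B).det = Complex.log A.det + Complex.log B.det := by
  rw [det_mul, Complex.log_mul_of_pos hA.det_pos hB.det_pos]

lemma log_det_inv (hA : A.PosDef) : Complex.log A⁻¹.det = -Complex.log A.det := by
  have h := hA.log_det_mul hA.inv
  rw [mul_nonsing_inv _ hA.det_pos.ne'.isUnit, det_one, Complex.log_one] at h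
  linear_combination -h

end PosDef

end Matrix

lemma DKL_of_posDef {A B : Matrix (Fin m) (Fin m) ℂ} (hA : A.PosDef) (hB : B.PosDef) :
    DKL A B = (A * B⁻¹ - 1).trace - (Complex.log A.det - Complex.log B.det) := by
  rw [DKL, hA.log_det_mul hB.inv, hB.log_det_inv, ← sub_eq_add_neg]

/-- The Jensen–Shannon divergence coincides with the log-determinant divergence
on Hermitian positive definite matrices. -/
theorem js_eq_logdet
    (C₁ C₂ : Matrix (Fin m) (Fin m) ℂ) (hC₁ : C₁.PosDef) (hC₂ : C₂.PosDef) :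
    (2 : ℂ)⁻¹ * (DKL C₁ ((2 : ℂ)⁻¹ • (C₁ + C₂)) + DKL C₂ ((2 : ℂ)⁻¹ • (C₁ + C₂)))
      = Complex.log ((2 : ℂ)⁻¹ • (C₁ + C₂)).det
        - (2 : ℂ)⁻¹ * Complex.log (C₁ * C₂).det := by
  set M := (2 : ℂ)⁻¹ • (C₁ + C₂) with hM_def
  have hM : M.PosDef := (hC₁.add hC₂).smul (by positivity)
  have hsum : C₁ + C₂ = (2 : ℂ) • M := by rw [hM_def, smul_smul]; norm_num
  have htrace := trace_mul_inv_sub_one_add_trace_mul_inv_sub_one hM.det_pos.ne'.isUnit hsum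
  rw [DKL_of_posDef hC₁ hM, DKL_of_posDef hC₂ hM, hC₁.log_det_mul hC₂]
  linear_combination (2 : ℂ)⁻¹ * htrace
end

section
/- Let C be an m×m Hermitian positive definite matrix with eigenvalues λ_{m−1} ≤ ... ≤ λ_0, and assume n ≤ m/2. For any real numbers μ_0, ..., μ_{n−1} satisfying λ_{i+m−n} ≤ μ_i ≤ λ_i for 0 ≤ i ≤ n−1, there exists a matrix Q ∈ ℂ^{m×n} with Q^H Q = I_n such that the eigenvalues of Q^H C Q are exactly μ_0, ..., μ_{n−1}. -/
open Matrix ComplexOrder Polynomial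

/-!
Diagonalize `C = U D Uᴴ` with eigenvalues listed as `lam`. Each target `μᵢ` is a convex
combination `tᵢ λᵢ + (1 - tᵢ) λ_{i+m-n}`, so the unit vector `√tᵢ vᵢ + √(1 - tᵢ) v_{i+m-n}`
built from the eigenvectors has Rayleigh quotient `μᵢ`. Because `2n ≤ m`, the index sets
`{i}` and `{i + m - n}` are disjoint, so these vectors are orthonormal and `QᴴCQ` is the
diagonal matrix of the `μᵢ`.
-/

namespace Matrix

variable {𝕜 : Type*} [RCLike 𝕜] {ι κ : Type*} [Fintype κ] [DecidableEq κ]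

lemma conjTranspose_submatrix_one_mul_mul_submatrix_one {ν : Type*} (M : Matrix κ κ 𝕜)
    (e : ν → κ) :
    ((1 : Matrix κ κ 𝕜).submatrix id e)ᴴ * M * (1 : Matrix κ κ 𝕜).submatrix id e =
      M.submatrix e e := by
  ext i j
  simp [mul_apply, one_apply]

lemma conjTranspose_mul_self_unitary_mul {U : Matrix κ κ 𝕜} (hU : U ∈ unitary (Matrix κ κ 𝕜))
    (S : Matrix κ ι 𝕜) : (U * S)ᴴ * (U * S) = Sᴴ * S := by
  rw [conjTranspose_mul, Matrix.mul_assoc, ← Matrix.mul_assoc Uᴴ, ← star_eq_conjTranspose,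
    Unitary.star_mul_self_of_mem hU, Matrix.one_mul]

lemma IsHermitian.conjTranspose_mul_mul_eigenvectorUnitary_mul {A : Matrix κ κ 𝕜}
    (hA : A.IsHermitian) (S : Matrix κ ι 𝕜) :
    ((hA.eigenvectorUnitary : Matrix κ κ 𝕜) * S)ᴴ * A *
        ((hA.eigenvectorUnitary : Matrix κ κ 𝕜) * S) =
      Sᴴ * diagonal (RCLike.ofReal ∘ hA.eigenvalues : κ → 𝕜) * S := by
  have h := hA.conjStarAlgAut_star_eigenvectorUnitary
  rw [Unitary.conjStarAlgAut_star_apply, star_eq_conjTranspose] at h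
  simp only [← h, conjTranspose_mul, Matrix.mul_assoc]

variable [Fintype ι] [DecidableEq ι]

lemma conjTranspose_fromRows_diagonal_mul_diagonal_mul (s t : ι → ℝ) (d₁ d₂ : ι → 𝕜) :
    (fromRows (diagonal fun i => (s i : 𝕜)) (diagonal fun i => (t i : 𝕜)))ᴴ *
        diagonal (Sum.elim d₁ d₂) *
        fromRows (diagonal fun i => (s i : 𝕜)) (diagonal fun i => (t i : 𝕜)) =
      diagonal fun i => ((s i ^ 2 : ℝ) : 𝕜) * d₁ i + ((t i ^ 2 : ℝ) : 𝕜) * d₂ i := by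
  rw [← fromBlocks_diagonal, conjTranspose_fromRows_eq_fromCols_conjTranspose,
    fromCols_mul_fromBlocks, fromCols_mul_fromRows]
  simp only [diagonal_conjTranspose, Pi.star_def, RCLike.star_def, RCLike.conj_ofReal,
    Matrix.mul_zero, add_zero, zero_add, diagonal_mul_diagonal, diagonal_add]
  congr 1
  ext i
  push_cast
  ring

/-- Column `i` is `√(w i) • e (a i) + √(1 - w i) • e (b i)`, with `e` the standard basis. -/
noncomputable def pairMix (𝕜 : Type*) [RCLike 𝕜] (a b : ι → κ) (w : ι → ℝ) : Matrix κ ι 𝕜 :=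
  (1 : Matrix κ κ 𝕜).submatrix id (Sum.elim a b) *
    fromRows (diagonal fun i => (√(w i) : 𝕜)) (diagonal fun i => (√(1 - w i) : 𝕜))

lemma conjTranspose_pairMix_mul_diagonal_mul_pairMix {a b : ι → κ}
    (hab : Function.Injective (Sum.elim a b)) {w : ι → ℝ} (hw : ∀ i, w i ∈ Set.Icc 0 1)
    (d : κ → 𝕜) :
    (pairMix 𝕜 a b w)ᴴ * diagonal d * pairMix 𝕜 a b w =
      diagonal fun i => (w i : 𝕜) * d (a i) + ((1 - w i : ℝ) : 𝕜) * d (b i) := by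
  rw [pairMix, conjTranspose_mul, ← Matrix.mul_assoc, Matrix.mul_assoc (fromRows _ _)ᴴ,
    Matrix.mul_assoc (fromRows _ _)ᴴ, conjTranspose_submatrix_one_mul_mul_submatrix_one,
    submatrix_diagonal _ _ hab, Sum.comp_elim, conjTranspose_fromRows_diagonal_mul_diagonal_mul]
  simp only [Real.sq_sqrt (hw _).1, Real.sq_sqrt (sub_nonneg.2 (hw _).2), Function.comp_apply]

lemma conjTranspose_pairMix_mul_pairMix {a b : ι → κ}
    (hab : Function.Injective (Sum.elim a b)) {w : ι → ℝ} (hw : ∀ i, w i ∈ Set.Icc 0 1) :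
    (pairMix 𝕜 a b w)ᴴ * pairMix 𝕜 a b w = 1 := by
  simpa using conjTranspose_pairMix_mul_diagonal_mul_pairMix (𝕜 := 𝕜) hab hw 1

theorem IsHermitian.exists_isometry_compression_eq_diagonal {A : Matrix κ κ 𝕜}
    (hA : A.IsHermitian) {a b : ι → κ} (hab : Function.Injective (Sum.elim a b)) {μ : ι → ℝ}
    (hμ : ∀ i, μ i ∈ segment ℝ (hA.eigenvalues (b i)) (hA.eigenvalues (a i))) :
    ∃ Q : Matrix κ ι 𝕜, Qᴴ * Q = 1 ∧ Qᴴ * A * Q = diagonal fun i => (μ i : 𝕜) := by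
  simp only [segment_eq_image, Set.mem_image] at hμ
  choose w hw hwμ using hμ
  refine ⟨(hA.eigenvectorUnitary : Matrix κ κ 𝕜) * pairMix 𝕜 a b w, ?_, ?_⟩
  · rw [conjTranspose_mul_self_unitary_mul (Subtype.prop _),
      conjTranspose_pairMix_mul_pairMix hab hw]
  · rw [hA.conjTranspose_mul_mul_eigenvectorUnitary_mul,
      conjTranspose_pairMix_mul_diagonal_mul_pairMix hab hw]
    congr 1
    ext i
    rw [← hwμ i]
    simp only [Function.comp_apply, smul_eq_mul]
    push_cast
    ring

end Matrix

lemma Fin.injective_sumElim_head_tail {m n : ℕ} (h : 2 * n ≤ m) :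
    Function.Injective (Sum.elim (fun i : Fin n => (⟨i, by omega⟩ : Fin m))
      fun i : Fin n => ⟨i + m - n, by omega⟩) := by
  refine Function.Injective.sumElim ?_ ?_ fun i j => ?_ <;>
    simp only [Function.Injective, ne_eq, Fin.ext_iff]
  · exact fun _ _ => id
  · omega
  · have := i.isLt
    omega

/-- Converse of interlacing: for eigenvalues `lam` of a Hermitian positive
definite `C` listed in decreasing order, `n ≤ m/2`, and any targets `mu` with
`lam (i+m−n) ≤ mu i ≤ lam i`, there is a matrix `Q` with orthonormal columns
such that the eigenvalues of `Qᴴ C Q` are exactly `mu₀,…,μ_{n−1}`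
(expressed via the characteristic polynomial). -/
theorem exists_stiefel_with_prescribed_eigenvalues {m n : ℕ} (hnm : 2 * n ≤ m)
    (C : Matrix (Fin m) (Fin m) ℂ) (hC : C.PosDef)
    (lam : Fin m → ℝ)
    (hlam : ∃ σ : Equiv.Perm (Fin m), lam = hC.isHermitian.eigenvalues ∘ σ)
    (mu : Fin n → ℝ)
    (hmu : ∀ (i : ℕ) (hi : i < n),
      lam ⟨i + m - n, by omega⟩ ≤ mu ⟨i, hi⟩ ∧ mu ⟨i, hi⟩ ≤ lam ⟨i, by omega⟩) :
    ∃ Q : Matrix (Fin m) (Fin n) ℂ, Qᴴ * Q = 1 ∧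
      (Qᴴ * C * Q).charpoly = ∏ i : Fin n, (X - Polynomial.C (mu i : ℂ)) := by
  obtain ⟨σ, rfl⟩ := hlam
  have hinj := σ.injective.comp (Fin.injective_sumElim_head_tail hnm)
  rw [Sum.comp_elim] at hinj
  obtain ⟨Q, hQ, hQC⟩ := hC.isHermitian.exists_isometry_compression_eq_diagonal hinj
    (μ := mu) fun i => Icc_subset_segment (hmu i i.2)
  exact ⟨Q, hQ, hQC ▸ charpoly_diagonal _⟩
end

section
/- With C an m×m Hermitian matrix, eigenvectors v_0, ..., v_{m−1} forming an orthonormal eigenbasis, n ≤ m/2, and t_0, ..., t_{n−1} ∈ [0,1], the matrix Q whose i-th column is √t_i v_i + √(1−t_i) v_{i+m−n} (0 ≤ i ≤ n−1) satisfies Q^H Q = I_n, and Q^H C Q = diag(t_0 λ_0 + (1−t_0) λ_{m−n}, ..., t_{n−1} λ_{n−1} + (1−t_{n−1}) λ_{m−1}), where λ_k is the eigenvalue of C for v_k. -/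
open Matrix

/-- Explicit construction of an orthonormal-column matrix `Q` whose columns are
`√tᵢ vᵢ + √(1−tᵢ) v_{i+m−n}` for an orthonormal eigenbasis `v` of a Hermitian
matrix `C`: then `Qᴴ Q = I` and `Qᴴ C Q` is diagonal with entries
`tᵢ λᵢ + (1−tᵢ) λ_{i+m−n}`. -/
theorem stiefel_construction {m n : ℕ} (hnm : 2 * n ≤ m)
    (C : Matrix (Fin m) (Fin m) ℂ) (hC : C.IsHermitian)
    (v : Fin m → (Fin m → ℂ)) (lam : Fin m → ℝ)
    (horth : ∀ i j : Fin m, star (v i) ⬝ᵥ v j = if i = j then 1 else 0)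
    (heig : ∀ k : Fin m, C *ᵥ v k = (lam k : ℂ) • v k)
    (t : Fin n → ℝ) (ht : ∀ i, t i ∈ Set.Icc (0 : ℝ) 1)
    (Q : Matrix (Fin m) (Fin n) ℂ)
    (hQ : Q = Matrix.of fun (r : Fin m) (i : Fin n) =>
      (Real.sqrt (t i) : ℂ) * v (Fin.castLE (by omega) i) r
        + (Real.sqrt (1 - t i) : ℂ)
            * v ⟨(i : ℕ) + m - n, by have := i.isLt; omega⟩ r) :
    Qᴴ * Q = 1 ∧
    Qᴴ * C * Q = Matrix.diagonal (fun i : Fin n =>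
      ((t i * lam (Fin.castLE (by omega) i)
        + (1 - t i) * lam ⟨(i : ℕ) + m - n, by have := i.isLt; omega⟩ : ℝ) : ℂ)) := by
  subst hQ
  have horth' : ∀ i j : Fin m,
      (∑ k, (starRingEnd ℂ) (v i k) * v j k) = if i = j then (1 : ℂ) else 0 := by
    intro i j
    have := horth i j
    simpa [dotProduct, Complex.star_def] using this
  -- dot product of two "two-term" combinations
  have dot : ∀ (α β γ δ : ℝ) (p q r s : Fin m),
      (∑ k, star ((α : ℂ) * v p k + (β : ℂ) * v q k)
          * ((γ : ℂ) * v r k + (δ : ℂ) * v s k))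
      = ((α * γ : ℝ) : ℂ) * (if p = r then 1 else 0)
        + ((α * δ : ℝ) : ℂ) * (if p = s then 1 else 0)
        + ((β * γ : ℝ) : ℂ) * (if q = r then 1 else 0)
        + ((β * δ : ℝ) : ℂ) * (if q = s then 1 else 0) := by
    intro α β γ δ p q r s
    have step : ∀ k : Fin m,
        star ((α : ℂ) * v p k + (β : ℂ) * v q k)
          * ((γ : ℂ) * v r k + (δ : ℂ) * v s k)
        = ((α * γ : ℝ) : ℂ) * (star (v p k) * v r k)
          + ((α * δ : ℝ) : ℂ) * (star (v p k) * v s k)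
          + ((β * γ : ℝ) : ℂ) * (star (v q k) * v r k)
          + ((β * δ : ℝ) : ℂ) * (star (v q k) * v s k) := by
      intro k
      simp only [star_add, star_mul', Complex.star_def, Complex.conj_ofReal]
      push_cast
      ring
    calc (∑ k, star ((α : ℂ) * v p k + (β : ℂ) * v q k)
            * ((γ : ℂ) * v r k + (δ : ℂ) * v s k))
        = ∑ k, (((α * γ : ℝ) : ℂ) * (star (v p k) * v r k)
            + ((α * δ : ℝ) : ℂ) * (star (v p k) * v s k)
            + ((β * γ : ℝ) : ℂ) * (star (v q k) * v r k)
            + ((β * δ : ℝ) : ℂ) * (star (v q k) * v s k)) :=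
          Finset.sum_congr rfl fun k _ => step k
      _ = _ := by
          simp [Complex.star_def, Finset.sum_add_distrib, ← Finset.mul_sum, horth']
  -- eigenvalue computation
  have hmv : ∀ (c : ℂ) (p : Fin m) (r : Fin m),
      (∑ s, C r s * (c * v p s)) = c * (lam p : ℂ) * v p r := by
    intro c p r
    have h := congrFun (heig p) r
    simp only [mulVec, dotProduct, Pi.smul_apply, smul_eq_mul] at h
    calc (∑ s, C r s * (c * v p s)) = c * ∑ s, C r s * v p s := by
          rw [Finset.mul_sum]; exact Finset.sum_congr rfl fun s _ => by ring
      _ = c * ((lam p : ℂ) * v p r) := by rw [h]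
      _ = _ := by ring
  have hsq : ∀ i : Fin n, Real.sqrt (t i) * Real.sqrt (t i) = t i :=
    fun i => Real.mul_self_sqrt (ht i).1
  have hsq' : ∀ i : Fin n, Real.sqrt (1 - t i) * Real.sqrt (1 - t i) = 1 - t i :=
    fun i => Real.mul_self_sqrt (by linarith [(ht i).2])
  constructor
  · ext i j
    rw [Matrix.mul_apply]
    simp only [conjTranspose_apply, Matrix.of_apply]
    rw [dot]
    rcases eq_or_ne i j with rfl | hij
    · have h1 : Fin.castLE (show n ≤ m by omega) i
          ≠ (⟨(i : ℕ) + m - n, by have := i.isLt; omega⟩ : Fin m) := by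
        have := i.isLt
        simp only [ne_eq, Fin.ext_iff, Fin.coe_castLE]
        omega
      rw [if_pos rfl, if_pos rfl, if_neg h1, if_neg (Ne.symm h1)]
      simp [hsq, hsq', Matrix.one_apply]
    · have hi := i.isLt
      have hj := j.isLt
      have hij' : (i : ℕ) ≠ (j : ℕ) := fun h => hij (Fin.ext h)
      rw [if_neg (by simp only [Fin.ext_iff, Fin.coe_castLE]; omega),
        if_neg (by simp only [Fin.ext_iff, Fin.coe_castLE]; omega),
        if_neg (by simp only [Fin.ext_iff, Fin.coe_castLE]; omega),
        if_neg (by simp only [Fin.ext_iff]; omega)]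
      simp [Matrix.one_apply, hij]
  · ext i j
    rw [Matrix.mul_assoc, Matrix.mul_apply]
    have inner : ∀ k : Fin m,
        ((C * Matrix.of fun (r : Fin m) (i : Fin n) =>
          (Real.sqrt (t i) : ℂ) * v (Fin.castLE (by omega) i) r
            + (Real.sqrt (1 - t i) : ℂ)
                * v ⟨(i : ℕ) + m - n, by have := i.isLt; omega⟩ r) k j)
        = ((Real.sqrt (t j) * lam (Fin.castLE (by omega) j) : ℝ) : ℂ)
            * v (Fin.castLE (by omega) j) k
          + ((Real.sqrt (1 - t j) * lam ⟨(j : ℕ) + m - n, by have := j.isLt; omega⟩ : ℝ) : ℂ)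
              * v ⟨(j : ℕ) + m - n, by have := j.isLt; omega⟩ k := by
      intro k
      rw [Matrix.mul_apply]
      simp only [Matrix.of_apply]
      rw [show (∑ s, C k s * ((Real.sqrt (t j) : ℂ) * v (Fin.castLE (by omega) j) s
          + (Real.sqrt (1 - t j) : ℂ)
              * v ⟨(j : ℕ) + m - n, by have := j.isLt; omega⟩ s))
        = (∑ s, C k s * ((Real.sqrt (t j) : ℂ) * v (Fin.castLE (by omega) j) s))
          + ∑ s, C k s * ((Real.sqrt (1 - t j) : ℂ)
              * v ⟨(j : ℕ) + m - n, by have := j.isLt; omega⟩ s) by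
          rw [← Finset.sum_add_distrib]
          exact Finset.sum_congr rfl fun s _ => by ring]
      rw [hmv, hmv]
      push_cast
      ring
    calc (∑ k, (Matrix.of fun (r : Fin m) (i : Fin n) =>
            (Real.sqrt (t i) : ℂ) * v (Fin.castLE (by omega) i) r
              + (Real.sqrt (1 - t i) : ℂ)
                  * v ⟨(i : ℕ) + m - n, by have := i.isLt; omega⟩ r)ᴴ i k
          * ((C * Matrix.of fun (r : Fin m) (i : Fin n) =>
            (Real.sqrt (t i) : ℂ) * v (Fin.castLE (by omega) i) r
              + (Real.sqrt (1 - t i) : ℂ)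
                  * v ⟨(i : ℕ) + m - n, by have := i.isLt; omega⟩ r) k j))
        = ∑ k, star ((Real.sqrt (t i) : ℂ) * v (Fin.castLE (by omega) i) k
              + (Real.sqrt (1 - t i) : ℂ)
                  * v ⟨(i : ℕ) + m - n, by have := i.isLt; omega⟩ k)
            * (((Real.sqrt (t j) * lam (Fin.castLE (by omega) j) : ℝ) : ℂ)
                * v (Fin.castLE (by omega) j) k
              + ((Real.sqrt (1 - t j)
                  * lam ⟨(j : ℕ) + m - n, by have := j.isLt; omega⟩ : ℝ) : ℂ)
                  * v ⟨(j : ℕ) + m - n, by have := j.isLt; omega⟩ k) := by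
          refine Finset.sum_congr rfl fun k _ => ?_
          rw [inner k]
          simp only [conjTranspose_apply, Matrix.of_apply]
      _ = _ := by
          rw [dot]
          rcases eq_or_ne i j with rfl | hij
          · have h1 : Fin.castLE (show n ≤ m by omega) i
                ≠ (⟨(i : ℕ) + m - n, by have := i.isLt; omega⟩ : Fin m) := by
              have := i.isLt
              simp only [ne_eq, Fin.ext_iff, Fin.coe_castLE]
              omega
            rw [if_pos rfl, if_pos rfl, if_neg h1, if_neg (Ne.symm h1)]
            rw [Matrix.diagonal_apply_eq]
            have e1 : ((Real.sqrt (t i) : ℂ)) * ((Real.sqrt (t i) : ℂ)) = (t i : ℂ) := by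
              rw [← Complex.ofReal_mul, hsq i]
            have e2 : ((Real.sqrt (1 - t i) : ℂ)) * ((Real.sqrt (1 - t i) : ℂ))
                = ((1 - t i : ℝ) : ℂ) := by
              rw [← Complex.ofReal_mul, hsq' i]
            push_cast at e1 e2 ⊢
            linear_combination (lam (Fin.castLE (by omega) i) : ℂ) * e1
              + (lam (⟨(i : ℕ) + m - n, by have := i.isLt; omega⟩ : Fin m) : ℂ) * e2
          · have hi := i.isLt
            have hj := j.isLt
            have hij' : (i : ℕ) ≠ (j : ℕ) := fun h => hij (Fin.ext h)
            rw [if_neg (by simp only [Fin.ext_iff, Fin.coe_castLE]; omega),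
              if_neg (by simp only [Fin.ext_iff, Fin.coe_castLE]; omega),
              if_neg (by simp only [Fin.ext_iff, Fin.coe_castLE]; omega),
              if_neg (by simp only [Fin.ext_iff]; omega)]
            rw [Matrix.diagonal_apply_ne _ hij]
            ring
end
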